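/- arXiv:1707.01656 — 2 statements merged into one kernel-verified Lean document; each statement's English description precedes it below -/
import Mathlib

section
/- Every basic information measure H(X_α | X_γ) with α, γ ⊆ N, α nonempty, can be written as a finite sum of elemental information measures (terms of the form H(X_i | X_{N\{i}}) and I(X_i; X_j | X_K), K ⊆ N\{i,j}) with nonnegative coefficients. -/
open scoped BigOperators

/-- Shannon entropy of a random variable `X` on a finite sample space with PMF `p`. -/
noncomputable def entropy {Ω α : Type*} [Fintype Ω] [Fintype α] [DecidableEq α]
    (p : Ω → ℝ) (X : Ω → α) : ℝ :=
  ∑ a : α, Real.negMulLog (∑ ω ∈ Finset.univ.filter (fun ω => X ω = a), p ω)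

/-- Conditional entropy `H(X | Y) = H(X,Y) - H(Y)`. -/
noncomputable def condEntropy {Ω α γ : Type*} [Fintype Ω] [Fintype α] [Fintype γ]
    [DecidableEq α] [DecidableEq γ] (p : Ω → ℝ) (X : Ω → α) (Y : Ω → γ) : ℝ :=
  entropy p (fun ω => (X ω, Y ω)) - entropy p Y

/-- Mutual information `I(X;Y) = H(X) + H(Y) - H(X,Y)`. -/
noncomputable def mutualInfo {Ω α γ : Type*} [Fintype Ω] [Fintype α] [Fintype γ]
    [DecidableEq α] [DecidableEq γ] (p : Ω → ℝ) (X : Ω → α) (Y : Ω → γ) : ℝ :=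
  entropy p X + entropy p Y - entropy p (fun ω => (X ω, Y ω))

/-- Conditional mutual information
`I(X;Y|Z) = H(X,Z) + H(Y,Z) - H(X,Y,Z) - H(Z)`. -/
noncomputable def condMutualInfo {Ω α γ δ : Type*} [Fintype Ω] [Fintype α] [Fintype γ]
    [Fintype δ] [DecidableEq α] [DecidableEq γ] [DecidableEq δ]
    (p : Ω → ℝ) (X : Ω → α) (Y : Ω → γ) (Z : Ω → δ) : ℝ :=
  entropy p (fun ω => (X ω, Z ω)) + entropy p (fun ω => (Y ω, Z ω))
    - entropy p (fun ω => (X ω, Y ω, Z ω)) - entropy p Z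

/-- Joint entropy of the subcollection of random variables indexed by `S`. -/
noncomputable def subEntropy {n : ℕ} {Ω : Type*} [Fintype Ω] {β : Fin n → Type*}
    [∀ i, Fintype (β i)] [∀ i, DecidableEq (β i)]
    (p : Ω → ℝ) (X : ∀ i, Ω → β i) (S : Finset (Fin n)) : ℝ :=
  entropy p (fun ω => fun i : {i // i ∈ S} => X i ω)

/-- Index of an elemental information measure: either an index `i` (for
`H(X_i | X_{N∖{i}})`) or a triple `(i, j, K)` with `i ≠ j`, `i ∉ K`, `j ∉ K`
(for `I(X_i;X_j|X_K)`). -/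
def ElemIdx (n : ℕ) : Type :=
  (Fin n) ⊕ {t : Fin n × Fin n × Finset (Fin n) // t.1 ≠ t.2.1 ∧ t.1 ∉ t.2.2 ∧ t.2.1 ∉ t.2.2}

instance (n : ℕ) : Fintype (ElemIdx n) := by unfold ElemIdx; infer_instance

/-- The value of the elemental information measure indexed by `e`. -/
noncomputable def elemValue {n : ℕ} {Ω : Type} [Fintype Ω] {β : Fin n → Type}
    [∀ i, Fintype (β i)] [∀ i, DecidableEq (β i)]
    (p : Ω → ℝ) (X : ∀ i, Ω → β i) : ElemIdx n → ℝ
  | Sum.inl i =>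
      condEntropy p (X i) (fun ω => fun j : {j // j ∈ Finset.univ.erase i} => X j ω)
  | Sum.inr t =>
      condMutualInfo p (X t.1.1) (X t.1.2.1)
        (fun ω => fun k : {k // k ∈ t.1.2.2} => X k ω)

/-! By the chain rule, `H(X_α | X_γ)` is the sum of the increments `H(X_i | X_S)` obtained by
adjoining the indices of `α \ γ` to `γ` one at a time. Each increment unfolds further as
`H(X_i | X_S) = I(X_i ; X_j | X_S) + H(X_i | X_{S ∪ {j}})` for any `j ∉ S ∪ {i}`, and repeating
this until `S ∪ {i} = N` ends with `H(X_i | X_{N \ {i}})`. All of this is bookkeeping of joint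
entropies `S ↦ H(X_S)`, so it holds for an arbitrary set function in place of `S ↦ H(X_S)`; in
particular the coefficients do not depend on the distribution. -/

open Finset Function

section Entropy

lemma entropy_comp_of_injective {Ω A B : Type*} [Fintype Ω] [Fintype A] [Fintype B]
    [DecidableEq A] [DecidableEq B] (p : Ω → ℝ) (X : Ω → A) {f : A → B} (hf : Injective f) :
    entropy p (fun ω => f (X ω)) = entropy p X := by
  refine (Fintype.sum_of_injective f hf _ _ (fun b hb => ?_) (fun a => ?_)).symm
  · rw [filter_false_of_mem fun ω _ hω => hb ⟨X ω, hω⟩, sum_empty, Real.negMulLog_zero]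
  · simp only [hf.eq_iff]

variable {n : ℕ} {Ω : Type*} [Fintype Ω] {β : Fin n → Type*} [∀ i, Fintype (β i)]
  [∀ i, DecidableEq (β i)] (p : Ω → ℝ) (X : ∀ i, Ω → β i)

lemma entropy_comp_eq_subEntropy {B : Type*} [Fintype B] [DecidableEq B] (S : Finset (Fin n))
    {f : (∀ k : {k // k ∈ S}, β k) → B} (hf : Injective f) :
    entropy p (fun ω => f (fun k => X k ω)) = subEntropy p X S :=
  entropy_comp_of_injective p _ hf

lemma entropy_prod_eq_subEntropy_insert (i : Fin n) (K : Finset (Fin n)) :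
    entropy p (fun ω => (X i ω, fun k : {k // k ∈ K} => X k ω)) = subEntropy p X (insert i K) := by
  let f : (∀ k : {k // k ∈ insert i K}, β k) → β i × ∀ k : {k // k ∈ K}, β k :=
    fun x => (x ⟨i, mem_insert_self i K⟩, fun k => x ⟨k, mem_insert_of_mem k.2⟩)
  have hf : Injective f := by
    intro x y h
    simp only [f, Prod.mk.injEq, funext_iff, Subtype.forall] at h
    funext ⟨k, hk⟩
    rcases mem_insert.1 hk with rfl | hk
    exacts [h.1, h.2 k hk]
  exact (entropy_comp_eq_subEntropy p X _ hf :)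

lemma entropy_triple_eq_subEntropy_insert_insert (i j : Fin n) (K : Finset (Fin n)) :
    entropy p (fun ω => (X i ω, X j ω, fun k : {k // k ∈ K} => X k ω))
      = subEntropy p X (insert i (insert j K)) := by
  let f : (∀ k : {k // k ∈ insert i (insert j K)}, β k) → β i × β j × ∀ k : {k // k ∈ K}, β k :=
    fun x => (x ⟨i, mem_insert_self i _⟩, x ⟨j, mem_insert_of_mem (mem_insert_self j K)⟩,
      fun k => x ⟨k, mem_insert_of_mem (mem_insert_of_mem k.2)⟩)
  have hf : Injective f := by
    intro x y h
    simp only [f, Prod.mk.injEq, funext_iff, Subtype.forall] at h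
    funext ⟨k, hk⟩
    rcases mem_insert.1 hk with rfl | hk
    · exact h.1
    rcases mem_insert.1 hk with rfl | hk
    exacts [h.2.1, h.2.2 k hk]
  exact (entropy_comp_eq_subEntropy p X _ hf :)

lemma entropy_prod_eq_subEntropy_union (α γ : Finset (Fin n)) :
    entropy p (fun ω => (fun i : {i // i ∈ α} => X i ω, fun i : {i // i ∈ γ} => X i ω))
      = subEntropy p X (α ∪ γ) := by
  let f : (∀ k : {k // k ∈ α ∪ γ}, β k) → (∀ i : {i // i ∈ α}, β i) × ∀ i : {i // i ∈ γ}, β i :=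
    fun x => (fun i => x ⟨i, mem_union_left γ i.2⟩, fun i => x ⟨i, mem_union_right α i.2⟩)
  have hf : Injective f := by
    intro x y h
    simp only [f, Prod.mk.injEq, funext_iff, Subtype.forall] at h
    funext ⟨k, hk⟩
    rcases mem_union.1 hk with hk | hk
    exacts [h.1 k hk, h.2 k hk]
  exact (entropy_comp_eq_subEntropy p X _ hf :)

end Entropy

section SetFunction

variable {n : ℕ}

/-- The elemental measure `e`, written in terms of a set function `E` that plays the role of
`S ↦ H(X_S)`. -/
def elemTerm (E : Finset (Fin n) → ℝ) : ElemIdx n → ℝ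
  | Sum.inl i => E univ - E (univ.erase i)
  | Sum.inr t => E (insert t.1.1 t.1.2.2) + E (insert t.1.2.1 t.1.2.2)
      - E (insert t.1.1 (insert t.1.2.1 t.1.2.2)) - E t.1.2.2

def IsNonnegElemComb (f : (Finset (Fin n) → ℝ) → ℝ) : Prop :=
  ∃ c : ElemIdx n → ℝ, (∀ e, 0 ≤ c e) ∧ ∀ E, f E = ∑ e, c e * elemTerm E e

namespace IsNonnegElemComb

lemma zero : IsNonnegElemComb (n := n) fun _ => 0 :=
  ⟨0, fun _ => le_rfl, fun _ => by simp⟩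

lemma add {f g : (Finset (Fin n) → ℝ) → ℝ} (hf : IsNonnegElemComb f)
    (hg : IsNonnegElemComb g) : IsNonnegElemComb fun E => f E + g E := by
  obtain ⟨c, hc, hfc⟩ := hf
  obtain ⟨d, hd, hgd⟩ := hg
  exact ⟨c + d, fun e => add_nonneg (hc e) (hd e),
    fun E => by simp only [hfc, hgd, Pi.add_apply, add_mul, sum_add_distrib]⟩

lemma congr {f g : (Finset (Fin n) → ℝ) → ℝ} (hf : IsNonnegElemComb f) (h : ∀ E, f E = g E) :
    IsNonnegElemComb g :=
  funext h ▸ hf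

end IsNonnegElemComb

lemma isNonnegElemComb_elemTerm (e : ElemIdx n) : IsNonnegElemComb fun E => elemTerm E e := by
  classical
  refine ⟨Pi.single e 1, fun e' => ?_, fun E => by simp [Pi.single_apply]⟩
  by_cases h : e' = e <;> simp [h]

lemma isNonnegElemComb_insert_sub (i : Fin n) (S : Finset (Fin n)) :
    IsNonnegElemComb fun E => E (insert i S) - E S := by
  by_cases hiS : i ∈ S
  · simpa only [insert_eq_of_mem hiS, sub_self] using IsNonnegElemComb.zero
  suffices ∀ T S, i ∉ S → univ \ insert i S = T →
      IsNonnegElemComb fun E => E (insert i S) - E S from this _ S hiS rfl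
  intro T
  induction T using Finset.induction_on with
  | empty =>
    intro S hiS hT
    have hS : S = univ.erase i := by
      rw [← erase_insert hiS, univ_subset_iff.1 (sdiff_eq_empty_iff_subset.1 hT)]
    subst hS
    simpa only [elemTerm, insert_erase (mem_univ i)] using isNonnegElemComb_elemTerm (Sum.inl i)
  | insert j T hjT ih =>
    intro S hiS hT
    have hj : j ∈ univ \ insert i S := hT ▸ mem_insert_self j T
    simp only [mem_sdiff, mem_insert, not_or] at hj
    have hT' : univ \ insert i (insert j S) = T := by
      rw [insert_comm, sdiff_insert, hT, erase_insert hjT]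
    refine ((ih _ (by simp [Ne.symm hj.2.1, hiS]) hT').add
      (isNonnegElemComb_elemTerm (Sum.inr ⟨(i, j, S), Ne.symm hj.2.1, hiS, hj.2.2⟩))).congr
      fun E => ?_
    simp only [elemTerm]
    ring

lemma isNonnegElemComb_union_sub (α γ : Finset (Fin n)) :
    IsNonnegElemComb fun E => E (α ∪ γ) - E γ := by
  induction α using Finset.induction_on with
  | empty => simpa only [empty_union, sub_self] using IsNonnegElemComb.zero
  | insert a α _ ih =>
    refine ((isNonnegElemComb_insert_sub a (α ∪ γ)).add ih).congr fun E => ?_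
    rw [insert_union]
    ring

end SetFunction

lemma elemValue_eq_elemTerm_subEntropy {n : ℕ} {Ω : Type} [Fintype Ω] {β : Fin n → Type}
    [∀ i, Fintype (β i)] [∀ i, DecidableEq (β i)] (p : Ω → ℝ) (X : ∀ i, Ω → β i)
    (e : ElemIdx n) : elemValue p X e = elemTerm (subEntropy p X) e := by
  rcases e with i | ⟨⟨i, j, K⟩, _⟩
  · -- `elemValue` equips `{j // j ∈ univ.erase i}` with `Subtype.fintype` rather than
    -- `Finset.Subtype.fintype`, so the two sides agree only up to `Subsingleton (Fintype _)`.
    simp only [elemValue, elemTerm, condEntropy]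
    congr 1
    · conv_rhs => rw [← insert_erase (mem_univ i), ← entropy_prod_eq_subEntropy_insert]
      congr!
    · unfold subEntropy
      congr!
  · simp only [elemValue, elemTerm, condMutualInfo, entropy_prod_eq_subEntropy_insert,
      entropy_triple_eq_subEntropy_insert_insert]
    rfl

theorem stmt5_general (n : ℕ) (α γ : Finset (Fin n)) :
    ∃ c : ElemIdx n → ℝ, (∀ e, 0 ≤ c e) ∧
      ∀ (Ω : Type) [Fintype Ω] (β : Fin n → Type) [∀ i, Fintype (β i)]
        [∀ i, DecidableEq (β i)] (p : Ω → ℝ) (X : ∀ i, Ω → β i),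
        (∀ ω, 0 ≤ p ω) → (∑ ω, p ω) = 1 →
        condEntropy p (fun ω => fun i : {i // i ∈ α} => X i ω)
            (fun ω => fun i : {i // i ∈ γ} => X i ω)
          = ∑ e, c e * elemValue p X e := by
  obtain ⟨c, hc, hcomb⟩ := isNonnegElemComb_union_sub α γ
  refine ⟨c, hc, fun Ω _ β _ _ p X _ _ => ?_⟩
  simp only [elemValue_eq_elemTerm_subEntropy, ← hcomb]
  rw [condEntropy, entropy_prod_eq_subEntropy_union]
  rfl

/-- Every basic conditional entropy `H(X_α | X_γ)` (with `α` nonempty) is a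
nonnegative linear combination of elemental information measures, with
coefficients independent of the distribution. -/
theorem stmt5 (n : ℕ) (α γ : Finset (Fin n)) (hα : α.Nonempty) :
    ∃ c : ElemIdx n → ℝ, (∀ e, 0 ≤ c e) ∧
      ∀ (Ω : Type) [Fintype Ω] (β : Fin n → Type) [∀ i, Fintype (β i)]
        [∀ i, DecidableEq (β i)] (p : Ω → ℝ) (X : ∀ i, Ω → β i),
        (∀ ω, 0 ≤ p ω) → (∑ ω, p ω) = 1 →
        condEntropy p (fun ω => fun i : {i // i ∈ α} => X i ω)
            (fun ω => fun i : {i // i ∈ γ} => X i ω)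
          = ∑ e, c e * elemValue p X e :=
  stmt5_general n α γ
end

section
/- Every basic information measure I(X_α; X_β | X_γ) with nonempty α, β ⊆ N can be written as a sum of elemental information measures with nonnegative coefficients. -/
set_option linter.unreachableTactic false
set_option linter.unusedTactic false
set_option linter.unnecessarySeqFocus false


open scoped BigOperators

lemma entropy_pair_of_det {Ω α γ : Type*} [Fintype Ω] [Fintype α] [Fintype γ]
    [DecidableEq α] [DecidableEq γ] (p : Ω → ℝ) (X : Ω → α) (Y : Ω → γ)
    (hdet : ∀ ω ω', X ω = X ω' → Y ω = Y ω') :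
    entropy p (fun ω => (X ω, Y ω)) = entropy p X := by
  unfold entropy
  rw [Fintype.sum_prod_type]
  refine Finset.sum_congr rfl ?_
  intro a _
  by_cases hex : ∃ ω, X ω = a
  · obtain ⟨ω₀, hω₀⟩ := hex
    have key : ∀ c : γ,
        (∑ ω ∈ Finset.univ.filter (fun ω => (X ω, Y ω) = (a, c)), p ω)
          = if c = Y ω₀ then (∑ ω ∈ Finset.univ.filter (fun ω => X ω = a), p ω) else 0 := by
      intro c
      split_ifs with hc
      · subst hc
        refine Finset.sum_congr ?_ (fun _ _ => rfl)
        ext ω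
        simp only [Finset.mem_filter, Finset.mem_univ, true_and, Prod.mk.injEq]
        constructor
        · tauto
        · intro hx; exact ⟨hx, hdet ω ω₀ (hx.trans hω₀.symm)⟩
      · have : Finset.univ.filter (fun ω => (X ω, Y ω) = (a, c)) = ∅ := by
          refine Finset.filter_eq_empty_iff.2 ?_
          intro ω _
          simp only [Prod.mk.injEq, not_and]
          intro hx
          exact fun hy => hc (hy ▸ hdet ω₀ ω (hω₀.trans hx.symm) ▸ rfl)
        rw [this, Finset.sum_empty]
    calc (∑ c : γ, Real.negMulLog (∑ ω ∈ Finset.univ.filter (fun ω => (X ω, Y ω) = (a, c)), p ω))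
        = ∑ c : γ, (if c = Y ω₀ then Real.negMulLog (∑ ω ∈ Finset.univ.filter (fun ω => X ω = a), p ω) else 0) := by
          refine Finset.sum_congr rfl (fun c _ => ?_)
          rw [key c]
          split_ifs <;> simp [Real.negMulLog_zero]
      _ = _ := by rw [Finset.sum_ite_eq' Finset.univ (Y ω₀)]; simp
  · have h0 : (Finset.univ.filter (fun ω => X ω = a)) = ∅ := by
      refine Finset.filter_eq_empty_iff.2 ?_
      intro ω _; exact fun hx => hex ⟨ω, hx⟩
    have h0' : ∀ c : γ, (Finset.univ.filter (fun ω => X ω = a ∧ Y ω = c)) = ∅ := by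
      intro c
      refine Finset.filter_eq_empty_iff.2 ?_
      intro ω _
      exact fun hx => absurd ⟨ω, hx.1⟩ hex
    simp [h0, h0', Real.negMulLog_zero]

lemma entropy_swap {Ω α γ : Type*} [Fintype Ω] [Fintype α] [Fintype γ]
    [DecidableEq α] [DecidableEq γ] (p : Ω → ℝ) (X : Ω → α) (Y : Ω → γ) :
    entropy p (fun ω => (X ω, Y ω)) = entropy p (fun ω => (Y ω, X ω)) := by
  unfold entropy
  rw [Fintype.sum_prod_type, Fintype.sum_prod_type, Finset.sum_comm]
  refine Finset.sum_congr rfl (fun c _ => Finset.sum_congr rfl (fun a _ => ?_))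
  congr 1
  refine Finset.sum_congr ?_ (fun _ _ => rfl)
  ext ω
  simp only [Finset.mem_filter, Finset.mem_univ, true_and, Prod.mk.injEq]
  tauto

lemma entropy_congr {Ω α γ : Type*} [Fintype Ω] [Fintype α] [Fintype γ]
    [DecidableEq α] [DecidableEq γ] (p : Ω → ℝ) (X : Ω → α) (Y : Ω → γ)
    (h : ∀ ω ω', X ω = X ω' ↔ Y ω = Y ω') :
    entropy p X = entropy p Y := by
  have h1 := entropy_pair_of_det p X Y (fun ω ω' hx => (h ω ω').1 hx)
  have h2 := entropy_pair_of_det p Y X (fun ω ω' hy => (h ω ω').2 hy)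
  rw [← h1, entropy_swap, h2]

instance (n : ℕ) : DecidableEq (ElemIdx n) := by unfold ElemIdx; infer_instance

/-- Abstract value of elemental measure on an arbitrary set function. -/
noncomputable def elemS {n : ℕ} (S : Finset (Fin n) → ℝ) : ElemIdx n → ℝ
  | Sum.inl i => S Finset.univ - S (Finset.univ.erase i)
  | Sum.inr t => S (insert t.1.1 t.1.2.2) + S (insert t.1.2.1 t.1.2.2)
      - S (insert t.1.1 (insert t.1.2.1 t.1.2.2)) - S t.1.2.2

/-- "representable with nonnegative coefficients". -/
def ERep {n : ℕ} (f : (Finset (Fin n) → ℝ) → ℝ) : Prop :=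
  ∃ c : ElemIdx n → ℝ, (∀ e, 0 ≤ c e) ∧ ∀ S, f S = ∑ e, c e * elemS S e

lemma erep_congr {n : ℕ} {f g : (Finset (Fin n) → ℝ) → ℝ} (h : ∀ S, f S = g S)
    (hg : ERep g) : ERep f := by
  obtain ⟨c, hc, hsum⟩ := hg
  exact ⟨c, hc, fun S => (h S).trans (hsum S)⟩

lemma erep_zero {n : ℕ} : ERep (n := n) (fun _ => 0) :=
  ⟨fun _ => 0, fun _ => le_refl 0, fun S => by simp⟩

lemma erep_single {n : ℕ} (e₀ : ElemIdx n) : ERep (fun S => elemS S e₀) := by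
  refine ⟨fun e => if e = e₀ then 1 else 0, fun e => by positivity, fun S => ?_⟩
  rw [Finset.sum_congr rfl (fun e _ => by rw [ite_mul, one_mul, zero_mul]),
    Finset.sum_ite_eq' Finset.univ e₀ (fun e => elemS S e)]
  simp

lemma erep_add {n : ℕ} {f g : (Finset (Fin n) → ℝ) → ℝ} (hf : ERep f) (hg : ERep g) :
    ERep (fun S => f S + g S) := by
  obtain ⟨c₁, hc₁, hs₁⟩ := hf
  obtain ⟨c₂, hc₂, hs₂⟩ := hg
  refine ⟨fun e => c₁ e + c₂ e, fun e => add_nonneg (hc₁ e) (hc₂ e), fun S => ?_⟩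
  simp only [add_mul, Finset.sum_add_distrib, hs₁ S, hs₂ S]

/-- H(i|K) is representable when i ∉ K. -/
lemma erepH {n : ℕ} : ∀ (m : ℕ) (K : Finset (Fin n)) (i : Fin n), i ∉ K →
    (Finset.univ \ insert i K).card = m → ERep (fun S => S (insert i K) - S K) := by
  intro m
  induction m with
  | zero =>
    intro K i hi hcard
    have huniv : insert i K = Finset.univ := by
      exact Finset.univ_subset_iff.1
        (Finset.sdiff_eq_empty_iff_subset.1 (Finset.card_eq_zero.1 hcard))
    have hK : K = Finset.univ.erase i := by
      ext j
      simp only [Finset.mem_erase, Finset.mem_univ, and_true]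
      constructor
      · intro hj hji; exact hi (hji ▸ hj)
      · intro hj
        have hm : j ∈ insert i K := huniv ▸ Finset.mem_univ j
        rcases Finset.mem_insert.1 hm with h | h
        · exact absurd h hj
        · exact h
    refine erep_congr (g := fun S => elemS S (Sum.inl i)) ?_ (erep_single _)
    intro S
    simp only [elemS]
    rw [hK, Finset.insert_erase (Finset.mem_univ i)]
  | succ m ih =>
    intro K i hi hcard
    have hne : (Finset.univ \ insert i K).Nonempty := by
      rw [← Finset.card_pos, hcard]; omega
    obtain ⟨j, hj⟩ := hne
    have hjmem := hj
    rw [Finset.mem_sdiff, Finset.mem_insert] at hj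
    push_neg at hj
    obtain ⟨-, hji, hjK⟩ := hj
    have hstep : ERep (fun S => S (insert i (insert j K)) - S (insert j K)) := by
      refine ih (insert j K) i (by simp [hji.symm, hi]) ?_
      rw [Finset.insert_comm, Finset.sdiff_insert, Finset.card_erase_of_mem hjmem, hcard]; omega
    have helem : ERep (fun S => elemS S (Sum.inr ⟨(i, j, K), fun h => hji h.symm, hi, hjK⟩)) :=
      erep_single _
    refine erep_congr ?_ (erep_add helem hstep)
    intro S
    simp only [elemS]
    ring

lemma sing_union {δ : Type*} [DecidableEq δ] (a : δ) (s : Finset δ) :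
    ({a} : Finset δ) ∪ s = insert a s := by ext x; simp

lemma erepMu {n : ℕ} : ∀ (m : ℕ) (α β γ : Finset (Fin n)), α.Nonempty → β.Nonempty →
    α.card + β.card ≤ m →
    ERep (fun S => S (α ∪ γ) + S (β ∪ γ) - S (α ∪ β ∪ γ) - S γ) := by
  intro m
  induction m with
  | zero =>
    intro α β γ hα hβ hcard
    have := Finset.card_pos.2 hα
    omega
  | succ m ih =>
    intro α β γ hα hβ hcard
    by_cases h2a : 2 ≤ α.card
    · obtain ⟨a, ha⟩ := hα
      have hcerase : (α.erase a).card = α.card - 1 := Finset.card_erase_of_mem ha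
      have hα₀ : (α.erase a).Nonempty := Finset.card_pos.1 (by omega)
      have h1 : ERep (fun S => S ({a} ∪ γ) + S (β ∪ γ) - S ({a} ∪ β ∪ γ) - S γ) := by
        refine ih {a} β γ (Finset.singleton_nonempty a) hβ ?_
        have := Finset.card_pos.2 hβ
        simp only [Finset.card_singleton]; omega
      have h2 : ERep (fun S => S (α.erase a ∪ insert a γ) + S (β ∪ insert a γ)
          - S (α.erase a ∪ β ∪ insert a γ) - S (insert a γ)) :=
        ih (α.erase a) β (insert a γ) hα₀ hβ (by omega)
      refine erep_congr ?_ (erep_add h1 h2)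
      intro S
      have e1 : ({a} : Finset (Fin n)) ∪ γ = insert a γ := sing_union a γ
      have e2 : α.erase a ∪ insert a γ = α ∪ γ := by
        ext x
        by_cases hx : x = a <;> simp [hx, ha, Finset.mem_erase] <;> tauto
      have e3 : ({a} : Finset (Fin n)) ∪ β ∪ γ = β ∪ insert a γ := by
        rw [sing_union, Finset.insert_union, Finset.union_insert]
      have e4 : α.erase a ∪ β ∪ insert a γ = α ∪ β ∪ γ := by
        ext x
        by_cases hx : x = a <;> simp [hx, ha, Finset.mem_erase] <;> tauto
      rw [e1, e2, e3, e4]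
      ring
    · by_cases h2b : 2 ≤ β.card
      · obtain ⟨b, hb⟩ := hβ
        have hcerase : (β.erase b).card = β.card - 1 := Finset.card_erase_of_mem hb
        have hβ₀ : (β.erase b).Nonempty := Finset.card_pos.1 (by omega)
        have h1 : ERep (fun S => S ({b} ∪ γ) + S (α ∪ γ) - S ({b} ∪ α ∪ γ) - S γ) := by
          refine ih {b} α γ (Finset.singleton_nonempty b) hα ?_
          have := Finset.card_pos.2 hα
          simp only [Finset.card_singleton]; omega
        have h2 : ERep (fun S => S (β.erase b ∪ insert b γ) + S (α ∪ insert b γ)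
            - S (β.erase b ∪ α ∪ insert b γ) - S (insert b γ)) :=
          ih (β.erase b) α (insert b γ) hβ₀ hα (by omega)
        refine erep_congr ?_ (erep_add h1 h2)
        intro S
        have e1 : ({b} : Finset (Fin n)) ∪ γ = insert b γ := sing_union b γ
        have e2 : β.erase b ∪ insert b γ = β ∪ γ := by
          ext x
          by_cases hx : x = b <;> simp [hx, hb, Finset.mem_erase] <;> tauto
        have e3 : ({b} : Finset (Fin n)) ∪ α ∪ γ = α ∪ insert b γ := by
          rw [sing_union, Finset.insert_union, Finset.union_insert]
        have e4 : β.erase b ∪ α ∪ insert b γ = α ∪ β ∪ γ := by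
          ext x
          by_cases hx : x = b <;> simp [hx, hb, Finset.mem_erase] <;> tauto
        rw [e1, e2, e3, e4]
        ring
      · have hca : α.card = 1 := by
          have := Finset.card_pos.2 hα; omega
        have hcb : β.card = 1 := by
          have := Finset.card_pos.2 hβ; omega
        obtain ⟨a, rfl⟩ := Finset.card_eq_one.1 hca
        obtain ⟨b, rfl⟩ := Finset.card_eq_one.1 hcb
        have eab : ({a} : Finset (Fin n)) ∪ {b} ∪ γ = insert a (insert b γ) := by
          rw [sing_union, Finset.insert_union, sing_union]
        by_cases haγ : a ∈ γ
        · refine erep_congr ?_ erep_zero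
          intro S
          rw [sing_union, sing_union, eab,
            Finset.insert_eq_self.2 haγ,
            Finset.insert_eq_self.2 (Finset.mem_insert_of_mem haγ)]
          ring
        · by_cases hbγ : b ∈ γ
          · refine erep_congr ?_ erep_zero
            intro S
            rw [sing_union, sing_union, eab,
              Finset.insert_eq_self.2 hbγ]
            ring
          · by_cases hab : a = b
            · subst hab
              refine erep_congr ?_
                (erepH (Finset.univ \ insert a γ).card γ a haγ rfl)
              intro S
              rw [sing_union, eab, Finset.insert_idem]
              ring
            · refine erep_congr ?_ (erep_single (Sum.inr ⟨(a, b, γ), hab, haγ, hbγ⟩))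
              intro S
              rw [sing_union, sing_union, eab]
              simp only [elemS]

lemma entropy_irrel {Ω αt : Type*} [Fintype Ω] {i1 i1' : Fintype αt} {i2 i2' : DecidableEq αt}
    (p : Ω → ℝ) (X : Ω → αt) : @entropy Ω αt _ i1 i2 p X = @entropy Ω αt _ i1' i2' p X := by
  cases Subsingleton.elim i1 i1'
  cases Subsingleton.elim i2 i2'
  rfl

section Bridge
variable {n : ℕ} {Ω : Type} [Fintype Ω] {β : Fin n → Type}
  [∀ i, Fintype (β i)] [∀ i, DecidableEq (β i)] (p : Ω → ℝ) (X : ∀ i, Ω → β i)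

lemma entropy_res_eq (S : Finset (Fin n))
    {F : Fintype ((i : {i // i ∈ S}) → β i.1)} {D : DecidableEq ((i : {i // i ∈ S}) → β i.1)} :
    @entropy Ω _ _ F D p (fun ω => fun i : {i // i ∈ S} => X i ω) = subEntropy p X S := by
  unfold subEntropy
  exact entropy_irrel p _

lemma entropy_pair_res (A B : Finset (Fin n))
    {F : Fintype (((i : {i // i ∈ A}) → β i.1) × ((i : {i // i ∈ B}) → β i.1))}
    {D : DecidableEq (((i : {i // i ∈ A}) → β i.1) × ((i : {i // i ∈ B}) → β i.1))} :
    @entropy Ω _ _ F D p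
        (fun ω => ((fun i : {i // i ∈ A} => X i ω), (fun i : {i // i ∈ B} => X i ω)))
      = subEntropy p X (A ∪ B) := by
  refine (entropy_irrel p _).trans
    ((entropy_congr p _ _ fun ω ω' => ?_).trans (entropy_irrel p _))
  simp only [Prod.mk.injEq, funext_iff, Subtype.forall, Finset.mem_union]
  constructor
  · rintro ⟨h1, h2⟩ i hi
    rcases hi with hi | hi
    exacts [h1 i hi, h2 i hi]
  · intro h
    exact ⟨fun i hi => h i (Or.inl hi), fun i hi => h i (Or.inr hi)⟩

lemma entropy_triple_res (A B C : Finset (Fin n))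
    {F : Fintype (((i : {i // i ∈ A}) → β i.1) ×
      ((i : {i // i ∈ B}) → β i.1) × ((i : {i // i ∈ C}) → β i.1))}
    {D : DecidableEq (((i : {i // i ∈ A}) → β i.1) ×
      ((i : {i // i ∈ B}) → β i.1) × ((i : {i // i ∈ C}) → β i.1))} :
    @entropy Ω _ _ F D p (fun ω => ((fun i : {i // i ∈ A} => X i ω),
        (fun i : {i // i ∈ B} => X i ω), (fun i : {i // i ∈ C} => X i ω)))
      = subEntropy p X (A ∪ B ∪ C) := by
  refine (entropy_irrel p _).trans
    ((entropy_congr p _ _ fun ω ω' => ?_).trans (entropy_irrel p _))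
  simp only [Prod.mk.injEq, funext_iff, Subtype.forall, Finset.mem_union]
  constructor
  · rintro ⟨h1, h2, h3⟩ i hi
    rcases hi with (hi | hi) | hi
    exacts [h1 i hi, h2 i hi, h3 i hi]
  · intro h
    exact ⟨fun i hi => h i (Or.inl (Or.inl hi)), fun i hi => h i (Or.inl (Or.inr hi)),
      fun i hi => h i (Or.inr hi)⟩

lemma entropy_one_res (i : Fin n) (K : Finset (Fin n))
    {F : Fintype (β i × ((k : {k // k ∈ K}) → β k.1))}
    {D : DecidableEq (β i × ((k : {k // k ∈ K}) → β k.1))} :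
    @entropy Ω _ _ F D p (fun ω => (X i ω, (fun k : {k // k ∈ K} => X k ω)))
      = subEntropy p X (insert i K) := by
  refine (entropy_irrel p _).trans
    ((entropy_congr p _ _ fun ω ω' => ?_).trans (entropy_irrel p _))
  simp only [Prod.mk.injEq, funext_iff, Subtype.forall, Finset.mem_insert]
  constructor
  · rintro ⟨h1, h2⟩ l hl
    rcases hl with rfl | hl
    exacts [h1, h2 l hl]
  · intro h
    exact ⟨h i (Or.inl rfl), fun l hl => h l (Or.inr hl)⟩

lemma entropy_two_res (i j : Fin n) (K : Finset (Fin n))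
    {F : Fintype (β i × β j × ((k : {k // k ∈ K}) → β k.1))}
    {D : DecidableEq (β i × β j × ((k : {k // k ∈ K}) → β k.1))} :
    @entropy Ω _ _ F D p (fun ω => (X i ω, X j ω, (fun k : {k // k ∈ K} => X k ω)))
      = subEntropy p X (insert i (insert j K)) := by
  refine (entropy_irrel p _).trans
    ((entropy_congr p _ _ fun ω ω' => ?_).trans (entropy_irrel p _))
  simp only [Prod.mk.injEq, funext_iff, Subtype.forall, Finset.mem_insert]
  constructor
  · rintro ⟨h1, h2, h3⟩ l hl
    rcases hl with rfl | rfl | hl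
    exacts [h1, h2, h3 l hl]
  · intro h
    exact ⟨h i (Or.inl rfl), h j (Or.inr (Or.inl rfl)), fun l hl => h l (Or.inr (Or.inr hl))⟩

lemma entropy_univ_res (i : Fin n)
    {F : Fintype (β i × ((k : {k // k ∈ Finset.univ.erase i}) → β k.1))}
    {D : DecidableEq (β i × ((k : {k // k ∈ Finset.univ.erase i}) → β k.1))} :
    @entropy Ω _ _ F D p
        (fun ω => (X i ω, (fun k : {k // k ∈ Finset.univ.erase i} => X k ω)))
      = subEntropy p X Finset.univ := by
  refine (entropy_irrel p _).trans
    ((entropy_congr p _ _ fun ω ω' => ?_).trans (entropy_irrel p _))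
  simp only [Prod.mk.injEq, funext_iff, Subtype.forall, Finset.mem_erase, Finset.mem_univ,
    and_true, true_implies]
  constructor
  · rintro ⟨h1, h2⟩ l
    by_cases hl : l = i
    · subst hl; exact h1
    · exact h2 l hl
  · intro h
    exact ⟨h i, fun l _ => h l⟩
end Bridge


lemma elemValue_eq {n : ℕ} {Ω : Type} [Fintype Ω] {β : Fin n → Type}
    [∀ i, Fintype (β i)] [∀ i, DecidableEq (β i)]
    (p : Ω → ℝ) (X : ∀ i, Ω → β i) (e : ElemIdx n) :
    elemValue p X e = elemS (subEntropy p X) e := by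
  cases e with
  | inl i =>
    simp only [elemValue]
    unfold condEntropy
    rw [entropy_univ_res p X i, entropy_res_eq p X (Finset.univ.erase i)]
    rfl
  | inr t =>
    obtain ⟨⟨i, j, K⟩, hij, hiK, hjK⟩ := t
    simp only [elemValue]
    unfold condMutualInfo
    rw [entropy_one_res p X i K, entropy_one_res p X j K, entropy_two_res p X i j K,
      entropy_res_eq p X K]
    rfl

/-- Every basic conditional mutual information `I(X_α; X_β | X_γ)` (with `α, β`
nonempty) is a nonnegative linear combination of elemental information
measures, with coefficients independent of the distribution. -/
theorem stmt6 (n : ℕ) (α' β' γ : Finset (Fin n)) (hα : α'.Nonempty) (hβ : β'.Nonempty) :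
    ∃ c : ElemIdx n → ℝ, (∀ e, 0 ≤ c e) ∧
      ∀ (Ω : Type) [Fintype Ω] (β : Fin n → Type) [∀ i, Fintype (β i)]
        [∀ i, DecidableEq (β i)] (p : Ω → ℝ) (X : ∀ i, Ω → β i),
        (∀ ω, 0 ≤ p ω) → (∑ ω, p ω) = 1 →
        condMutualInfo p (fun ω => fun i : {i // i ∈ α'} => X i ω)
            (fun ω => fun i : {i // i ∈ β'} => X i ω)
            (fun ω => fun i : {i // i ∈ γ} => X i ω)
          = ∑ e, c e * elemValue p X e := by
  obtain ⟨c, hc, hS⟩ := erepMu (α'.card + β'.card) α' β' γ hα hβ le_rfl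
  refine ⟨c, hc, ?_⟩
  intro Ω _ β _ _ p X _ _
  have hL : condMutualInfo p (fun ω => fun i : {i // i ∈ α'} => X i ω)
      (fun ω => fun i : {i // i ∈ β'} => X i ω)
      (fun ω => fun i : {i // i ∈ γ} => X i ω)
      = subEntropy p X (α' ∪ γ) + subEntropy p X (β' ∪ γ)
        - subEntropy p X (α' ∪ β' ∪ γ) - subEntropy p X γ := by
    unfold condMutualInfo
    rw [entropy_pair_res p X α' γ, entropy_pair_res p X β' γ,
      entropy_triple_res p X α' β' γ, entropy_res_eq p X γ]
  rw [hL]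
  refine (hS (subEntropy p X)).trans ?_
  exact Finset.sum_congr rfl fun e _ => by rw [elemValue_eq]
end
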